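/- Let Σ be the graph of F = (f,g): Ω ⊂ ℝ² → ℝ² satisfying f_x²+g_x²+f_y²+g_y² = c and f_xg_y − f_yg_x = 1 for a constant c > 2, and for m > 0 let Σ_m be the graph of mF. Then Σ_m has constant principal angles θ₁ = arcsec√(1 + (m²/2)(c − √(c²−4))) and θ₂ = arcsec√(1 + (m²/2)(c + √(c²−4))) with respect to the plane ℝ²×{0}. -/

import Mathlib

noncomputable section
open Real
open scoped RealInnerProductSpace

abbrev E4 := EuclideanSpace ℝ (Fin 4)

/-- `θ₁ ≤ θ₂` are the principal angles between the planes `V` and `W` of `ℝ⁴`: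
`cos²θ₁`, `cos²θ₂` are the eigenvalues of the quadratic form `v ↦ ‖p_W v‖²` on `V`. -/
def IsPrincipalAngles (V W : Submodule ℝ E4) (θ₁ θ₂ : ℝ) : Prop :=
  0 ≤ θ₁ ∧ θ₁ ≤ θ₂ ∧ θ₂ ≤ π / 2 ∧
  ∃ v₁ v₂ : E4, v₁ ∈ V ∧ v₂ ∈ V ∧ ‖v₁‖ = 1 ∧ ‖v₂‖ = 1 ∧ ⟪v₁, v₂⟫ = 0 ∧
    ∀ v ∈ V, ‖(W.orthogonalProjectionOnto v : E4)‖ ^ 2 =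
      Real.cos θ₁ ^ 2 * ⟪v, v₁⟫ ^ 2 + Real.cos θ₂ ^ 2 * ⟪v, v₂⟫ ^ 2

def px (f : ℝ × ℝ → ℝ) (p : ℝ × ℝ) : ℝ := fderiv ℝ f p (1, 0)
def py (f : ℝ × ℝ → ℝ) (p : ℝ × ℝ) : ℝ := fderiv ℝ f p (0, 1)

/-- The plane `Π = ℝ² × {0}` in `ℝ⁴`. -/
def Pl12 : Submodule ℝ E4 :=
  Submodule.span ℝ {EuclideanSpace.single 0 1, EuclideanSpace.single 1 1}

/-- Existence of a unit eigenvector for the eigenvalue `μ` of the symmetric matrix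
`!![A, B; B, C]` with trace `co` and determinant `1`, where `μ` is a root of the
characteristic polynomial. -/
lemma exists_unit_eigenvector (A B C co μ : ℝ) (hAC : A + C = co) (hdet : A * C - B ^ 2 = 1)
    (hμ : μ ^ 2 - co * μ + 1 = 0) :
    ∃ x y : ℝ, x ^ 2 + y ^ 2 = 1 ∧ A * x + B * y = μ * x ∧ B * x + C * y = μ * y := by
  by_cases hB : B = 0 ∧ A = μ
  · exact ⟨1, 0, by norm_num, by rw [hB.1, hB.2]; ring, by rw [hB.1]; ring⟩
  · rw [not_and_or] at hB
    have hr2 : 0 < B ^ 2 + (μ - A) ^ 2 := by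
      rcases hB with h | h
      · have : 0 < B ^ 2 := by positivity
        nlinarith [sq_nonneg (μ - A)]
      · have hMA : μ - A ≠ 0 := sub_ne_zero.mpr (Ne.symm h)
        have : 0 < (μ - A) ^ 2 := by positivity
        nlinarith [sq_nonneg B]
    set r := Real.sqrt (B ^ 2 + (μ - A) ^ 2) with hrdef
    have hr : 0 < r := Real.sqrt_pos.2 hr2
    have hrsq : r ^ 2 = B ^ 2 + (μ - A) ^ 2 := Real.sq_sqrt hr2.le
    refine ⟨B / r, (μ - A) / r, ?_, ?_, ?_⟩
    · field_simp
      linarith [hrsq]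
    · field_simp
      ring
    · field_simp
      linear_combination (-1 : ℝ) * hμ + μ * hAC + (-1 : ℝ) * hdet

lemma proj_Pl12 (v : E4) :
    (Pl12.orthogonalProjectionOnto v : E4) =
      (v 0) • EuclideanSpace.single 0 1 + (v 1) • EuclideanSpace.single 1 1 := by
  rw [← Submodule.starProjection_apply]
  apply Submodule.eq_starProjection_of_mem_of_inner_eq_zero
  · exact Submodule.add_mem _
      (Submodule.smul_mem _ _ (Submodule.subset_span (by simp)))
      (Submodule.smul_mem _ _ (Submodule.subset_span (by simp)))
  · intro w hw
    rw [Pl12, Submodule.mem_span_pair] at hw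
    obtain ⟨γ, δ, rfl⟩ := hw
    simp [PiLp.inner_apply, Fin.sum_univ_four, EuclideanSpace.single_apply]

lemma norm_proj_Pl12 (v : E4) :
    ‖(Pl12.orthogonalProjectionOnto v : E4)‖ ^ 2 = (v 0) ^ 2 + (v 1) ^ 2 := by
  rw [proj_Pl12, EuclideanSpace.norm_sq_eq]
  simp [Fin.sum_univ_four, EuclideanSpace.single_apply]

lemma key_lemma (a b p q c m : ℝ) (hc : 2 < c) (hm : 0 < m)
    (h1 : a ^ 2 + b ^ 2 + p ^ 2 + q ^ 2 = c) (h2 : a * q - p * b = 1) :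
    IsPrincipalAngles
      (Submodule.span ℝ
        {EuclideanSpace.single 0 1 + (m * a) • EuclideanSpace.single 2 1
            + (m * b) • EuclideanSpace.single 3 1,
         EuclideanSpace.single 1 1 + (m * p) • EuclideanSpace.single 2 1
            + (m * q) • EuclideanSpace.single 3 1})
      Pl12
      (Real.arccos (Real.sqrt (1 + m ^ 2 / 2 * (c - Real.sqrt (c ^ 2 - 4))))⁻¹)
      (Real.arccos (Real.sqrt (1 + m ^ 2 / 2 * (c + Real.sqrt (c ^ 2 - 4))))⁻¹) := by
  have hc0 : 0 < c := by linarith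
  set s := Real.sqrt (c ^ 2 - 4) with hsdef
  have hsq : s ^ 2 = c ^ 2 - 4 := Real.sq_sqrt (by nlinarith)
  have hspos : 0 < s := Real.sqrt_pos.2 (by nlinarith)
  have hslt : s < c := by nlinarith
  -- matrix entries
  have hdet : (a ^ 2 + b ^ 2) * (p ^ 2 + q ^ 2) - (a * p + b * q) ^ 2 = 1 := by
    linear_combination (a * q - p * b + 1) * h2
  have hchar : ((c - s) / 2) ^ 2 - c * ((c - s) / 2) + 1 = 0 := by
    linear_combination (1 / 4 : ℝ) * hsq
  obtain ⟨x, y, hxy, he1, he2⟩ := exists_unit_eigenvector (a ^ 2 + b ^ 2) (a * p + b * q)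
    (p ^ 2 + q ^ 2) c ((c - s) / 2) (by linarith) hdet hchar
  -- the two values sec² θᵢ
  set L1 : ℝ := 1 + m ^ 2 / 2 * (c - s) with hL1def
  set L2 : ℝ := 1 + m ^ 2 / 2 * (c + s) with hL2def
  have hm2cs : 0 ≤ m ^ 2 * (c - s) := mul_nonneg (sq_nonneg m) (by linarith)
  have hm2s : 0 ≤ m ^ 2 * s := mul_nonneg (sq_nonneg m) hspos.le
  have hm2cs' : 0 ≤ m ^ 2 * (c + s) := mul_nonneg (sq_nonneg m) (by linarith)
  have hL1pos : (1 : ℝ) ≤ L1 := by rw [hL1def]; linarith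
  have hL2pos : (1 : ℝ) ≤ L2 := by rw [hL2def]; linarith
  have hL1L2 : L1 ≤ L2 := by rw [hL1def, hL2def]; linarith
  have hs1 : 1 ≤ Real.sqrt L1 := Real.one_le_sqrt.2 hL1pos
  have hs2 : 1 ≤ Real.sqrt L2 := Real.one_le_sqrt.2 hL2pos
  have hsq1 : Real.sqrt L1 ^ 2 = L1 := Real.sq_sqrt (by linarith)
  have hsq2 : Real.sqrt L2 ^ 2 = L2 := Real.sq_sqrt (by linarith)
  have hsp1 : (0:ℝ) < Real.sqrt L1 := by linarith
  have hsp2 : (0:ℝ) < Real.sqrt L2 := by linarith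
  have hinv1nn : 0 ≤ (Real.sqrt L1)⁻¹ := by positivity
  have hinv2nn : 0 ≤ (Real.sqrt L2)⁻¹ := by positivity
  have hinv1' : (Real.sqrt L1)⁻¹ ≤ 1 := by
    rw [← one_div]; exact (div_le_one hsp1).2 hs1
  have hinv2' : (Real.sqrt L2)⁻¹ ≤ 1 := by
    rw [← one_div]; exact (div_le_one hsp2).2 hs2
  have hcos1 : Real.cos (Real.arccos (Real.sqrt L1)⁻¹) = (Real.sqrt L1)⁻¹ :=
    Real.cos_arccos (by linarith) hinv1'
  have hcos2 : Real.cos (Real.arccos (Real.sqrt L2)⁻¹) = (Real.sqrt L2)⁻¹ :=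
    Real.cos_arccos (by linarith) hinv2'
  -- tangent vectors
  set X₁ : E4 := EuclideanSpace.single 0 1 + (m * a) • EuclideanSpace.single 2 1
      + (m * b) • EuclideanSpace.single 3 1 with hX₁def
  set X₂ : E4 := EuclideanSpace.single 1 1 + (m * p) • EuclideanSpace.single 2 1
      + (m * q) • EuclideanSpace.single 3 1 with hX₂def
  have hinner : ∀ α β γ δ : ℝ, ⟪α • X₁ + β • X₂, γ • X₁ + δ • X₂⟫ =
      α * γ * (1 + m ^ 2 * (a ^ 2 + b ^ 2)) + (α * δ + β * γ) * (m ^ 2 * (a * p + b * q))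
        + β * δ * (1 + m ^ 2 * (p ^ 2 + q ^ 2)) := by
    intro α β γ δ
    rw [hX₁def, hX₂def]
    simp [PiLp.inner_apply, Fin.sum_univ_four, EuclideanSpace.single_apply]
    ring
  refine ⟨Real.arccos_nonneg _, ?_, ?_, ?_⟩
  · -- θ₁ ≤ θ₂
    have hmono : (Real.sqrt L2)⁻¹ ≤ (Real.sqrt L1)⁻¹ := by
      apply inv_anti₀ hsp1
      exact Real.sqrt_le_sqrt (by linarith)
    have := Real.monotone_arcsin hmono
    simp only [Real.arccos]
    linarith
  · exact Real.arccos_le_pi_div_two.2 hinv2nn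
  · -- the orthonormal pair
    refine ⟨(Real.sqrt L1)⁻¹ • (x • X₁ + y • X₂),
      (Real.sqrt L2)⁻¹ • ((-y) • X₁ + x • X₂), ?_, ?_, ?_, ?_, ?_, ?_⟩
    · exact Submodule.smul_mem _ _ (Submodule.add_mem _
        (Submodule.smul_mem _ _ (Submodule.subset_span (by simp)))
        (Submodule.smul_mem _ _ (Submodule.subset_span (by simp))))
    · exact Submodule.smul_mem _ _ (Submodule.add_mem _
        (Submodule.smul_mem _ _ (Submodule.subset_span (by simp)))
        (Submodule.smul_mem _ _ (Submodule.subset_span (by simp))))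
    · -- ‖v₁‖ = 1
      have hu : ⟪x • X₁ + y • X₂, x • X₁ + y • X₂⟫ = L1 := by
        rw [hinner, hL1def]
        linear_combination (1 + m ^ 2 * ((c - s) / 2)) * hxy + (m ^ 2 * x) * he1
          + (m ^ 2 * y) * he2
      have hnorm : ‖(Real.sqrt L1)⁻¹ • (x • X₁ + y • X₂)‖ ^ 2 = 1 := by
        rw [← real_inner_self_eq_norm_sq, real_inner_smul_left, real_inner_smul_right, hu]
        field_simp
        exact hsq1.symm
      rw [← Real.sqrt_one, ← hnorm, Real.sqrt_sq (norm_nonneg _)]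
    · -- ‖v₂‖ = 1
      have hu : ⟪(-y) • X₁ + x • X₂, (-y) • X₁ + x • X₂⟫ = L2 := by
        rw [hinner, hL2def]
        linear_combination (1 + m ^ 2 * ((c + s) / 2)) * hxy - (m ^ 2 * x) * he1
          - (m ^ 2 * y) * he2 + (m ^ 2 * (x ^ 2 + y ^ 2)) * h1
      have hnorm : ‖(Real.sqrt L2)⁻¹ • ((-y) • X₁ + x • X₂)‖ ^ 2 = 1 := by
        rw [← real_inner_self_eq_norm_sq, real_inner_smul_left, real_inner_smul_right, hu]
        field_simp
        exact hsq2.symm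
      rw [← Real.sqrt_one, ← hnorm, Real.sqrt_sq (norm_nonneg _)]
    · -- orthogonality
      rw [real_inner_smul_left, real_inner_smul_right, hinner]
      have : x * (-y) * (1 + m ^ 2 * (a ^ 2 + b ^ 2))
          + (x * x + y * (-y)) * (m ^ 2 * (a * p + b * q))
          + y * x * (1 + m ^ 2 * (p ^ 2 + q ^ 2)) = 0 := by
        linear_combination (m ^ 2 * x) * he2 - (m ^ 2 * y) * he1
      rw [this, mul_zero, mul_zero]
    · -- the quadratic form identity
      intro v hv
      rw [Submodule.mem_span_pair] at hv
      obtain ⟨α, β, rfl⟩ := hv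
      rw [norm_proj_Pl12]
      have hv0 : (α • X₁ + β • X₂) 0 = α := by
        rw [hX₁def, hX₂def]
        simp [EuclideanSpace.single_apply]
      have hv1 : (α • X₁ + β • X₂) 1 = β := by
        rw [hX₁def, hX₂def]
        simp [EuclideanSpace.single_apply]
      rw [hv0, hv1, hcos1, hcos2]
      rw [real_inner_smul_right, hinner, real_inner_smul_right, hinner]
      have hA : α * x * (1 + m ^ 2 * (a ^ 2 + b ^ 2)) + (α * y + β * x) * (m ^ 2 * (a * p + b * q))
          + β * y * (1 + m ^ 2 * (p ^ 2 + q ^ 2)) = L1 * (α * x + β * y) := by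
        rw [hL1def]
        linear_combination (m ^ 2 * α) * he1 + (m ^ 2 * β) * he2
      have hB : α * (-y) * (1 + m ^ 2 * (a ^ 2 + b ^ 2)) + (α * x + β * (-y)) * (m ^ 2 * (a * p + b * q))
          + β * x * (1 + m ^ 2 * (p ^ 2 + q ^ 2)) = L2 * (β * x - α * y) := by
        rw [hL2def]
        linear_combination (m ^ 2 * α) * he2 - (m ^ 2 * β) * he1
          + (m ^ 2 * (β * x - α * y)) * h1
      rw [hA, hB]
      have hL1ne : L1 ≠ 0 := by linarith
      have hL2ne : L2 ≠ 0 := by linarith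
      have e1 : ((Real.sqrt L1)⁻¹ * (L1 * (α * x + β * y))) ^ 2 = L1 * (α * x + β * y) ^ 2 := by
        rw [mul_pow, inv_pow, hsq1, mul_pow]
        field_simp
      have e2 : ((Real.sqrt L2)⁻¹ * (L2 * (β * x - α * y))) ^ 2 = L2 * (β * x - α * y) ^ 2 := by
        rw [mul_pow, inv_pow, hsq2, mul_pow]
        field_simp
      have c1 : ((Real.sqrt L1)⁻¹) ^ 2 = L1⁻¹ := by rw [inv_pow, hsq1]
      have c2 : ((Real.sqrt L2)⁻¹) ^ 2 = L2⁻¹ := by rw [inv_pow, hsq2]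
      rw [c1, c2, e1, e2]
      rw [inv_mul_cancel_left₀ hL1ne, inv_mul_cancel_left₀ hL2ne]
      linear_combination (-(α ^ 2 + β ^ 2)) * hxy

/-- If the graph of `(f, g)` satisfies `f_x²+g_x²+f_y²+g_y² = c` and
`f_x g_y − f_y g_x = 1` for a constant `c > 2`, then for every `m > 0` the graph `Σ_m` of
`m·(f,g)` — with tangent vectors `(1,0,m f_x, m g_x)` and `(0,1,m f_y, m g_y)` — has
constant principal angles `θ₁ = arcsec √(1 + (m²/2)(c − √(c²−4)))` and
`θ₂ = arcsec √(1 + (m²/2)(c + √(c²−4)))` with respect to the plane `ℝ²×{0}`,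
where `arcsec x = arccos x⁻¹`. -/
theorem deformation_constant_principal_angles
    (f g : ℝ × ℝ → ℝ) (Ω : Set (ℝ × ℝ)) (hΩ : IsOpen Ω)
    (hf : ContDiffOn ℝ (⊤ : ℕ∞) f Ω) (hg : ContDiffOn ℝ (⊤ : ℕ∞) g Ω)
    (c : ℝ) (hc : 2 < c)
    (heq : ∀ p ∈ Ω, px f p ^ 2 + px g p ^ 2 + py f p ^ 2 + py g p ^ 2 = c ∧
      px f p * py g p - py f p * px g p = 1)
    (m : ℝ) (hm : 0 < m) :
    ∀ p ∈ Ω,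
      IsPrincipalAngles
        (Submodule.span ℝ
          {EuclideanSpace.single 0 1 + (m * px f p) • EuclideanSpace.single 2 1
              + (m * px g p) • EuclideanSpace.single 3 1,
           EuclideanSpace.single 1 1 + (m * py f p) • EuclideanSpace.single 2 1
              + (m * py g p) • EuclideanSpace.single 3 1})
        Pl12
        (Real.arccos (Real.sqrt (1 + m ^ 2 / 2 * (c - Real.sqrt (c ^ 2 - 4))))⁻¹)
        (Real.arccos (Real.sqrt (1 + m ^ 2 / 2 * (c + Real.sqrt (c ^ 2 - 4))))⁻¹) := by
  intro P hP
  obtain ⟨e1, e2⟩ := heq P hP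
  exact key_lemma (px f P) (px g P) (py f P) (py g P) c m hc hm
    (by linarith) (by linarith)
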